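/- arXiv:2305.17831 — 2 statements merged into one kernel-verified Lean document; each statement's English description precedes it below -/
import Mathlib

section
/- Let λ ∈ ℝ^n have all positive entries, λ_1 the largest, and 1 ≤ l < n. Then for each i ≠ 1: 4·(S_{n-2;1i}(λ)·S_l(λ) − S_n(λ)·S_{l-2;1i}(λ)) − (3/λ_1)·(S_{n-1;i}(λ)·S_l(λ) − S_n(λ)·S_{l-1;i}(λ)) > 0. Equivalently, S_{n-2;1i}·S_l − S_n·S_{l-2;1i} − (3/(4λ_1))·(S_{n-1;i}·S_l − S_n·S_{l-1;i}) > 0. -/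
open Finset

/-- `S m lam` : the `m`-th elementary symmetric function of the entries of `lam`,
with the conventions `S 0 = 1` and `S m = 0` for `m < 0` (and for `m > n`). -/
noncomputable def S {n : ℕ} (m : ℤ) (lam : Fin n → ℝ) : ℝ :=
  if 0 ≤ m then
    ∑ A ∈ Finset.powersetCard m.toNat (Finset.univ : Finset (Fin n)), ∏ j ∈ A, lam j
  else 0

/-!
Expand every elementary symmetric function in the two variables `λ₁`, `λᵢ` over the remaining
`n - 2` variables `μ`, writing `T k = S_k(μ)`. Since `μ` has only `n - 2` nonzero entries,
`T (n-1) = T n = 0`, so `S_n(λ) = λ₁ λᵢ T (n-2)` and `S_{n-1;i}(λ) = λ₁ T (n-2)`, and the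
expression collapses to `T (n-2) · (T l + (λ₁ + 4 λᵢ) T (l-1))`, which is positive because
`0 ≤ l - 1 ≤ n - 2`.
-/

open Function

lemma sum_powersetCard_succ_prod_of_mem {α β : Type*} [DecidableEq α] [CommSemiring β]
    {s : Finset α} {k : α} (hk : k ∈ s) (r : ℕ) (f : α → β) :
    ∑ A ∈ powersetCard (r + 1) s, ∏ j ∈ A, f j
      = ∑ A ∈ powersetCard (r + 1) (s.erase k), ∏ j ∈ A, f j
        + f k * ∑ A ∈ powersetCard r (s.erase k), ∏ j ∈ A, f j := by
  have hks : ∀ A ∈ powersetCard r (s.erase k), k ∉ A := fun A hA =>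
    notMem_mono (mem_powersetCard.1 hA).1 (notMem_erase k s)
  conv_lhs => rw [← insert_erase hk, powersetCard_succ_insert (notMem_erase k s)]
  rw [sum_union, sum_image, mul_sum]
  · exact congrArg _ (sum_congr rfl fun A hA => prod_insert (hks A hA))
  · exact insert_erase_invOn.2.injOn.mono fun A hA => hks A hA
  · refine disjoint_left.2 fun A hA hA' => ?_
    obtain ⟨B, -, rfl⟩ := mem_image.1 hA'
    exact notMem_erase k s ((mem_powersetCard.1 hA).1 (mem_insert_self k B))

lemma sum_powersetCard_prod_update_zero {α β : Type*} [DecidableEq α] [CommSemiring β]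
    (s : Finset α) (k : α) (r : ℕ) (f : α → β) :
    ∑ A ∈ powersetCard r s, ∏ j ∈ A, update f k 0 j
      = ∑ A ∈ powersetCard r (s.erase k), ∏ j ∈ A, f j := by
  rw [← sum_subset (powersetCard_mono (erase_subset k s))]
  · exact sum_congr rfl fun A hA => prod_congr rfl fun j hj =>
      update_of_ne (ne_of_mem_erase ((mem_powersetCard.1 hA).1 hj)) 0 f
  · intro A hA hA'
    have hkA : k ∈ A := by
      by_contra hkA
      rw [mem_powersetCard] at hA hA'
      exact hA' ⟨subset_erase.2 ⟨hA.1, hkA⟩, hA.2⟩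
    exact prod_eq_zero hkA (update_self k 0 f)

lemma S_natCast {n : ℕ} (r : ℕ) (lam : Fin n → ℝ) :
    S r lam = ∑ A ∈ powersetCard r univ, ∏ j ∈ A, lam j := by
  simp [S]

lemma S_eq_S_update_add_mul {n : ℕ} (lam : Fin n → ℝ) (k : Fin n) (m : ℤ) :
    S m lam = S m (update lam k 0) + lam k * S (m - 1) (update lam k 0) := by
  rcases lt_or_ge m 1 with hm | hm
  · rcases lt_or_ge m 0 with hm0 | hm0
    · simp only [S, if_neg hm0.not_ge, if_neg (show ¬ 0 ≤ m - 1 by omega)]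
      ring
    · obtain rfl : m = 0 := by omega
      simp [S]
  · obtain ⟨r, rfl⟩ : ∃ r : ℕ, m = r + 1 := ⟨(m - 1).toNat, by omega⟩
    rw [add_sub_cancel_right, ← Nat.cast_succ, S_natCast, S_natCast, S_natCast,
      sum_powersetCard_prod_update_zero, sum_powersetCard_prod_update_zero,
      sum_powersetCard_succ_prod_of_mem (mem_univ k)]

lemma S_eq_S_update_update {n : ℕ} (lam : Fin n → ℝ) {k k' : Fin n} (hkk' : k ≠ k')
    (m : ℤ) :
    S m lam = S m (update (update lam k 0) k' 0)
      + (lam k + lam k') * S (m - 1) (update (update lam k 0) k' 0)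
      + lam k * lam k' * S (m - 2) (update (update lam k 0) k' 0) := by
  rw [S_eq_S_update_add_mul lam k, S_eq_S_update_add_mul (update lam k 0) k' m,
    S_eq_S_update_add_mul (update lam k 0) k' (m - 1), update_of_ne hkk'.symm,
    sub_sub, one_add_one_eq_two]
  ring

lemma update_zero_nonneg {ι : Type*} [DecidableEq ι] {f : ι → ℝ} (hf : 0 ≤ f) (k : ι) :
    0 ≤ update f k 0 :=
  le_update_iff.2 ⟨le_rfl, fun j _ => hf j⟩

lemma S_nonneg {n : ℕ} {lam : Fin n → ℝ} (h0 : 0 ≤ lam) (m : ℤ) : 0 ≤ S m lam := by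
  unfold S
  split_ifs
  · exact sum_nonneg fun A _ => prod_nonneg fun j _ => h0 j
  · exact le_rfl

lemma S_pos {n : ℕ} {lam : Fin n → ℝ} (h0 : 0 ≤ lam) (s : Finset (Fin n))
    (hs : ∀ j ∈ s, 0 < lam j) {m : ℤ} (hm0 : 0 ≤ m) (hms : m ≤ #s) : 0 < S m lam := by
  obtain ⟨B, hBs, hB⟩ := exists_subset_card_eq (show m.toNat ≤ #s by omega)
  rw [S, if_pos hm0]
  exact (prod_pos fun j hj => hs j (hBs hj)).trans_le
    (single_le_sum (f := fun A => ∏ j ∈ A, lam j) (fun A _ => prod_nonneg fun j _ => h0 j)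
      (mem_powersetCard.2 ⟨subset_univ B, hB⟩))

lemma S_eq_zero_of_card_lt {n : ℕ} {lam : Fin n → ℝ} (s : Finset (Fin n))
    (hs : ∀ j ∉ s, lam j = 0) {m : ℤ} (hms : #s < m) : S m lam = 0 := by
  unfold S
  split_ifs
  · refine sum_eq_zero fun A hA => ?_
    obtain ⟨j, hjA, hjs⟩ : ∃ j ∈ A, j ∉ s := not_subset.1 fun hAs => by
      have := card_le_card hAs
      rw [(mem_powersetCard.1 hA).2] at this
      omega
    exact prod_eq_zero hjA (hs j hjs)
  · rfl

section UpdateUpdate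

variable {m : ℕ} {lam : Fin (m + 2) → ℝ} {k k' : Fin (m + 2)}

lemma card_erase_erase_univ (hkk' : k ≠ k') : #((univ.erase k).erase k') = m := by
  simp [card_erase_of_mem, hkk'.symm]

lemma S_update_update_eq_zero (hkk' : k ≠ k') {r : ℤ} (hr : m < r) :
    S r (update (update lam k 0) k' 0) = 0 := by
  refine S_eq_zero_of_card_lt ((univ.erase k).erase k') (fun j hj => ?_)
    (by rwa [card_erase_erase_univ hkk'])
  simp only [mem_erase, mem_univ, and_true, not_and, not_not] at hj
  rcases eq_or_ne j k' with rfl | hjk'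
  · exact update_self j 0 _
  · rw [update_of_ne hjk', hj hjk', update_self]

lemma S_update_update_pos (hpos : ∀ j, 0 < lam j) (hkk' : k ≠ k') {r : ℤ} (hr0 : 0 ≤ r)
    (hrm : r ≤ m) : 0 < S r (update (update lam k 0) k' 0) := by
  refine S_pos (update_zero_nonneg (update_zero_nonneg (fun j => (hpos j).le) k) k')
    ((univ.erase k).erase k') (fun j hj => ?_) hr0 (by rwa [card_erase_erase_univ hkk'])
  simp only [mem_erase, mem_univ, and_true] at hj
  rw [update_of_ne hj.1, update_of_ne hj.2]
  exact hpos j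

end UpdateUpdate

theorem stmt9_general (m : ℕ) (lam : Fin (m + 2) → ℝ)
    (hpos : ∀ j, 0 < lam j)
    (l : ℤ) (hl1 : 1 ≤ l) (hln : l < m + 2) (i : Fin (m + 2)) (hi : i ≠ 0) :
    0 < 4 * (S (m : ℤ) (Function.update (Function.update lam 0 0) i 0) * S l lam
          - S ((m : ℤ) + 2) lam
            * S (l - 2) (Function.update (Function.update lam 0 0) i 0))
        - (3 / lam 0) * (S ((m : ℤ) + 1) (Function.update lam i 0) * S l lam
          - S ((m : ℤ) + 2) lam * S (l - 1) (Function.update lam i 0)) := by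
  set μ := update (update lam 0 0) i 0
  have hlam : ∀ r, S r lam = S r μ + (lam 0 + lam i) * S (r - 1) μ
      + lam 0 * lam i * S (r - 2) μ := S_eq_S_update_update lam hi.symm
  have hlam_i : ∀ r, S r (update lam i 0) = S r μ + lam 0 * S (r - 1) μ := fun r => by
    rw [S_eq_S_update_add_mul _ 0, update_comm hi, update_of_ne hi.symm]
  have hμ_nonneg : 0 ≤ μ := update_zero_nonneg (update_zero_nonneg (fun j => (hpos j).le) 0) i
  have hμ_succ : S ((m : ℤ) + 1) μ = 0 := S_update_update_eq_zero hi.symm (by omega)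
  have hμ_succ_succ : S ((m : ℤ) + 2) μ = 0 := S_update_update_eq_zero hi.symm (by omega)
  have hμ_top : 0 < S m μ := S_update_update_pos hpos hi.symm (by omega) le_rfl
  have hμ_pred : 0 < S (l - 1) μ := S_update_update_pos hpos hi.symm (by omega) (by omega)
  rw [hlam l, hlam (m + 2), hlam_i (m + 1), hlam_i (l - 1), show (m : ℤ) + 2 - 1 = m + 1 by ring,
    show (m : ℤ) + 2 - 2 = m by ring, add_sub_cancel_right, sub_sub, one_add_one_eq_two,
    hμ_succ, hμ_succ_succ]
  have ha : lam 0 ≠ 0 := (hpos 0).ne'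
  calc 0 < S m μ * (S l μ + (lam 0 + 4 * lam i) * S (l - 1) μ) :=
        mul_pos hμ_top (add_pos_of_nonneg_of_pos (S_nonneg hμ_nonneg l)
          (mul_pos (by linarith [hpos 0, hpos i]) hμ_pred))
    _ = _ := by field_simp; ring

theorem stmt9 (m : ℕ) (lam : Fin (m + 2) → ℝ)
    (hdec : ∀ i j : Fin (m + 2), i ≤ j → lam j ≤ lam i) (hpos : ∀ j, 0 < lam j)
    (l : ℤ) (hl1 : 1 ≤ l) (hln : l < m + 2) (i : Fin (m + 2)) (hi : i ≠ 0) :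
    0 < 4 * (S (m : ℤ) (Function.update (Function.update lam 0 0) i 0) * S l lam
          - S ((m : ℤ) + 2) lam
            * S (l - 2) (Function.update (Function.update lam 0 0) i 0))
        - (3 / lam 0) * (S ((m : ℤ) + 1) (Function.update lam i 0) * S l lam
          - S ((m : ℤ) + 2) lam * S (l - 1) (Function.update lam i 0)) :=
  stmt9_general m lam hpos l hl1 hln i hi
end

section
/- Let 0 ≤ l < n and λ ∈ ℝ^n with λ_1 ≥ ... ≥ λ_n > 0. Then Σ_{i=1}^n f_i(λ) ≥ ((n-l)/n)·μ'(S_n/S_l)·S_{n-1}(λ)/S_l(λ), where μ(t) = t^{1/(n-l)}, f(λ) = μ(S_n(λ)/S_l(λ)), and f_i = ∂f/∂λ_i. -/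
/-!
Since `∂S_m/∂λ_i = S_{m-1;i}` and `∑_i S_{m;i} = (n - m) S_m`, the sum of the `f_i` equals
`μ'(S_n/S_l) (S_{n-1} S_l - (n-l+1) S_n S_{l-1}) / S_l²`, so the claim is the Newton-type
inequality `n (n-l+1) S_n S_{l-1} ≤ l S_{n-1} S_l`. Passing to the reciprocals `1/λ_i` turns it
into `n (m+1) e_{m+1} ≤ (n-m) e_1 e_m` with `m = n - l`. Both sides count monomials: writing
`e_1 e_m = U + (m+1) e_{m+1}` with `U = ∑_{|B|=m} ∑_{i∈B} x_i x^B`, Cauchy–Schwarz bounds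
`∑_{|C|=m-1} (∑_{i∉C} x_i)² x^C = U + m (m+1) e_{m+1}` by `(n-m+1) U`, whence
`m (m+1) e_{m+1} ≤ (n-m) U`.
-/

open Finset

open Function

section ElementarySymmetric

variable {ι R : Type*}

def esymm [CommSemiring R] (s : Finset ι) (m : ℕ) (x : ι → R) : R :=
  ∑ A ∈ s.powersetCard m, ∏ j ∈ A, x j

section CommSemiring

variable [CommSemiring R]

@[simp]
theorem esymm_zero (s : Finset ι) (x : ι → R) : esymm s 0 x = 1 := by
  simp [esymm]

theorem esymm_pos [PartialOrder R] [IsStrictOrderedRing R] {s : Finset ι} {m : ℕ} (hm : m ≤ #s)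
    {x : ι → R} (hx : ∀ i, 0 < x i) : 0 < esymm s m x :=
  sum_pos (fun _ _ => prod_pos fun j _ => hx j) (powersetCard_nonempty.2 hm)

theorem esymm_univ_one [Fintype ι] (x : ι → R) : esymm univ 1 x = ∑ i, x i := by
  simp [esymm, powersetCard_one]

theorem esymm_insert [DecidableEq ι] {i : ι} {s : Finset ι} (hi : i ∉ s) (m : ℕ)
    (x : ι → R) : esymm (insert i s) (m + 1) x = esymm s (m + 1) x + x i * esymm s m x := by
  have hnot : ∀ C ∈ s.powersetCard m, i ∉ C := fun C hC h =>
    hi ((mem_powersetCard.1 hC).1 h)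
  rw [esymm, powersetCard_succ_insert hi, sum_union, sum_image, esymm, esymm, mul_sum]
  · exact congrArg _ (sum_congr rfl fun C hC => prod_insert (hnot C hC))
  · intro C hC D hD h
    rw [← erase_insert (hnot C hC), ← erase_insert (hnot D hD)]
    exact congrArg (·.erase i) h
  · refine disjoint_left.2 fun A hA hA' => ?_
    obtain ⟨C, -, rfl⟩ := mem_image.1 hA'
    exact hi ((mem_powersetCard.1 hA).1 (mem_insert_self i C))

theorem esymm_update_of_notMem [DecidableEq ι] {i : ι} {s : Finset ι} (hi : i ∉ s) (m : ℕ)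
    (x : ι → R) (t : R) : esymm s m (update x i t) = esymm s m x :=
  sum_congr rfl fun _ hA =>
    prod_update_of_notMem (fun h => hi ((mem_powersetCard.1 hA).1 h)) x t

variable [Fintype ι] [DecidableEq ι]

theorem esymm_univ_update_succ (i : ι) (m : ℕ) (x : ι → R) (t : R) :
    esymm univ (m + 1) (update x i t)
      = esymm (univ.erase i) (m + 1) x + t * esymm (univ.erase i) m x := by
  conv_lhs => rw [← insert_erase (mem_univ i)]
  rw [esymm_insert (notMem_erase i _), update_self,
    esymm_update_of_notMem (notMem_erase i _), esymm_update_of_notMem (notMem_erase i _)]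

theorem esymm_univ_update_zero (i : ι) (m : ℕ) (x : ι → R) :
    esymm univ m (update x i 0) = esymm (univ.erase i) m x := by
  cases m with
  | zero => simp
  | succ m => rw [esymm_univ_update_succ, zero_mul, add_zero]

end CommSemiring

theorem sum_esymm_erase [CommRing R] [Fintype ι] [DecidableEq ι] (m : ℕ) (x : ι → R) :
    ∑ i, esymm (univ.erase i) m x = ((Fintype.card ι : R) - m) * esymm univ m x := by
  have h : ∀ i, esymm (univ.erase i) m x
      = ∑ A ∈ powersetCard m univ, if i ∈ A then 0 else ∏ j ∈ A, x j := by
    intro i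
    rw [esymm, sum_ite, sum_const_zero, zero_add]
    congr 1
    ext A
    simp [subset_erase, and_comm]
  rw [sum_congr rfl fun i _ => h i, sum_comm, esymm, mul_sum]
  refine sum_congr rfl fun A hA => ?_
  have hA := mem_powersetCard_univ.1 hA
  rw [sum_ite, sum_const_zero, zero_add, sum_const, nsmul_eq_mul, filter_not,
    filter_mem_eq_inter, univ_inter, ← compl_eq_univ_sdiff, card_compl, hA,
    Nat.cast_sub (hA ▸ card_le_univ A)]

section Newton

variable [Fintype ι] [DecidableEq ι]

theorem sum_powersetCard_sum_compl {M : Type*} [AddCommMonoid M] (m : ℕ)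
    (f : Finset ι → ι → M) :
    ∑ C ∈ powersetCard m univ, ∑ i ∈ Cᶜ, f C i
      = ∑ B ∈ powersetCard (m + 1) univ, ∑ i ∈ B, f (B.erase i) i := by
  rw [sum_sigma', sum_sigma']
  refine sum_nbij' (fun p => ⟨insert p.2 p.1, p.2⟩) (fun p => ⟨p.1.erase p.2, p.2⟩)
    ?_ ?_ ?_ ?_ ?_
  · rintro ⟨C, i⟩ hp
    simp only [mem_sigma, mem_powersetCard_univ, mem_compl] at hp
    simp only [mem_sigma, mem_powersetCard_univ]
    exact ⟨by rw [card_insert_of_notMem hp.2, hp.1], mem_insert_self _ _⟩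
  · rintro ⟨B, i⟩ hp
    simp only [mem_sigma, mem_powersetCard_univ] at hp
    simp only [mem_sigma, mem_powersetCard_univ, mem_compl]
    exact ⟨by rw [card_erase_of_mem hp.2, hp.1]; rfl, notMem_erase _ _⟩
  · rintro ⟨C, i⟩ hp
    simp only [mem_sigma, mem_powersetCard_univ, mem_compl] at hp
    simp [erase_insert hp.2]
  · rintro ⟨B, i⟩ hp
    simp only [mem_sigma, mem_powersetCard_univ] at hp
    simp [insert_erase hp.2]
  · rintro ⟨C, i⟩ hp
    simp only [mem_sigma, mem_powersetCard_univ, mem_compl] at hp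
    simp [erase_insert hp.2]

section CommSemiring

variable [CommSemiring R]

theorem sum_powersetCard_sum_compl_mul_prod (m : ℕ) (x : ι → R) :
    ∑ B ∈ powersetCard m univ, ∑ i ∈ Bᶜ, x i * ∏ j ∈ B, x j
      = (m + 1) * esymm univ (m + 1) x := by
  rw [sum_powersetCard_sum_compl m fun C i => x i * ∏ j ∈ C, x j, esymm, mul_sum]
  refine sum_congr rfl fun A hA => ?_
  rw [sum_congr rfl fun i hi => mul_prod_erase A x hi, sum_const,
    (mem_powersetCard_univ.1 hA), nsmul_eq_mul]
  push_cast
  ring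

theorem esymm_univ_one_mul_esymm (m : ℕ) (x : ι → R) :
    esymm univ 1 x * esymm univ m x
      = ∑ B ∈ powersetCard m univ, ∑ i ∈ B, x i * ∏ j ∈ B, x j
        + (m + 1) * esymm univ (m + 1) x := by
  rw [← sum_powersetCard_sum_compl_mul_prod, ← sum_add_distrib, esymm_univ_one, esymm, mul_sum]
  exact sum_congr rfl fun B _ => by rw [sum_add_sum_compl, sum_mul]

theorem sum_powersetCard_sq_sum_compl_mul_prod (m : ℕ) (x : ι → R) :
    ∑ C ∈ powersetCard m univ, (∑ i ∈ Cᶜ, x i) ^ 2 * ∏ j ∈ C, x j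
      = ∑ B ∈ powersetCard (m + 1) univ, ∑ i ∈ B, x i * ∏ j ∈ B, x j
        + (m + 1) * ((m + 2) * esymm univ (m + 2) x) := by
  have hsplit : ∀ B ∈ powersetCard (m + 1) univ, ∀ i ∈ B,
      x i * ((∑ j ∈ (B.erase i)ᶜ, x j) * ∏ j ∈ B.erase i, x j)
        = x i * ∏ j ∈ B, x j + (∑ j ∈ Bᶜ, x j) * ∏ j ∈ B, x j := by
    intro B _ i hi
    rw [compl_erase, sum_insert (by simp [hi]), ← mul_prod_erase B x hi]
    ring
  calc ∑ C ∈ powersetCard m univ, (∑ i ∈ Cᶜ, x i) ^ 2 * ∏ j ∈ C, x j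
      = ∑ C ∈ powersetCard m univ, ∑ i ∈ Cᶜ, x i * ((∑ j ∈ Cᶜ, x j) * ∏ j ∈ C, x j) := by
        refine sum_congr rfl fun C _ => ?_
        rw [← sum_mul, sq, mul_assoc]
    _ = ∑ B ∈ powersetCard (m + 1) univ,
          (∑ i ∈ B, x i * ∏ j ∈ B, x j + (m + 1) * ((∑ j ∈ Bᶜ, x j) * ∏ j ∈ B, x j)) := by
        rw [sum_powersetCard_sum_compl]
        refine sum_congr rfl fun B hB => ?_
        rw [sum_congr rfl (hsplit B hB), sum_add_distrib, sum_const, (mem_powersetCard_univ.1 hB),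
          nsmul_eq_mul]
        push_cast
        ring
    _ = _ := by
        rw [sum_add_distrib, ← mul_sum]
        simp_rw [sum_mul]
        rw [sum_powersetCard_sum_compl_mul_prod]
        push_cast
        ring

end CommSemiring

variable [CommRing R] [LinearOrder R] [IsStrictOrderedRing R]

theorem sum_powersetCard_sq_sum_compl_mul_prod_le {x : ι → R} (hx : ∀ i, 0 ≤ x i) (m : ℕ) :
    ∑ C ∈ powersetCard m univ, (∑ i ∈ Cᶜ, x i) ^ 2 * ∏ j ∈ C, x j
      ≤ ((Fintype.card ι : R) - m)
        * ∑ B ∈ powersetCard (m + 1) univ, ∑ i ∈ B, x i * ∏ j ∈ B, x j := by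
  have hreindex : ∑ B ∈ powersetCard (m + 1) univ, ∑ i ∈ B, x i * ∏ j ∈ B, x j
      = ∑ C ∈ powersetCard m univ, ∑ i ∈ Cᶜ, x i ^ 2 * ∏ j ∈ C, x j := by
    rw [sum_powersetCard_sum_compl]
    refine sum_congr rfl fun B _ => sum_congr rfl fun i hi => ?_
    rw [← mul_prod_erase B x hi]
    ring
  rw [hreindex, mul_sum]
  refine sum_le_sum fun C hC => ?_
  have hCcard := mem_powersetCard_univ.1 hC
  have hcard : ((#Cᶜ : ℕ) : R) = (Fintype.card ι : R) - m := by
    rw [card_compl, hCcard, Nat.cast_sub (hCcard ▸ card_le_univ C)]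
  calc (∑ i ∈ Cᶜ, x i) ^ 2 * ∏ j ∈ C, x j
      ≤ (#Cᶜ * ∑ i ∈ Cᶜ, x i ^ 2) * ∏ j ∈ C, x j :=
        mul_le_mul_of_nonneg_right sq_sum_le_card_mul_sum_sq (prod_nonneg fun j _ => hx j)
    _ = _ := by rw [hcard, mul_assoc, sum_mul]

theorem card_mul_esymm_succ_le {x : ι → R} (hx : ∀ i, 0 ≤ x i) (m : ℕ) :
    (Fintype.card ι : R) * (m + 1) * esymm univ (m + 1) x
      ≤ ((Fintype.card ι : R) - m) * (esymm univ 1 x * esymm univ m x) := by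
  cases m with
  | zero => simp
  | succ k =>
    have hprod := esymm_univ_one_mul_esymm (k + 1) x
    have hsq := sum_powersetCard_sq_sum_compl_mul_prod k x
    have hcs := sum_powersetCard_sq_sum_compl_mul_prod_le hx k
    rw [hprod]
    push_cast at hsq ⊢
    linear_combination hcs - hsq

end Newton

section Field

variable [Field R] [Fintype ι] [DecidableEq ι]

theorem esymm_univ_eq_prod_mul_esymm_inv {m : ℕ} (hm : m ≤ Fintype.card ι) {x : ι → R}
    (hx : ∀ i, x i ≠ 0) : esymm univ m x = (∏ i, x i) * esymm univ (Fintype.card ι - m) x⁻¹ := by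
  rw [esymm, esymm, mul_sum]
  refine sum_nbij' (fun A => Aᶜ) (fun C => Cᶜ) ?_ ?_ (fun A _ => compl_compl A)
    (fun C _ => compl_compl C) fun A _ => ?_
  · intro A hA
    rw [mem_powersetCard_univ] at hA ⊢
    rw [card_compl, hA]
  · intro C hC
    rw [mem_powersetCard_univ] at hC ⊢
    rw [card_compl, hC]
    omega
  · have hne : ∏ j ∈ Aᶜ, x j ≠ 0 := prod_ne_zero_iff.2 fun j _ => hx j
    simp only [Pi.inv_apply]
    rw [prod_inv_distrib, ← prod_mul_prod_compl A x]
    field_simp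

variable [LinearOrder R] [IsStrictOrderedRing R]

theorem card_mul_esymm_card_mul_esymm_le {x : ι → R} (hx : ∀ i, 0 < x i) {k : ℕ}
    (hk : k < Fintype.card ι) :
    (Fintype.card ι : R) * ((Fintype.card ι : R) - k)
        * (esymm univ (Fintype.card ι) x * esymm univ k x)
      ≤ (k + 1) * (esymm univ (Fintype.card ι - 1) x * esymm univ (k + 1) x) := by
  set n := Fintype.card ι
  set P := ∏ i, x i
  obtain ⟨m, hm⟩ : ∃ m, n = k + 1 + m := ⟨n - (k + 1), by omega⟩
  have hP : 0 < P := prod_pos fun i _ => hx i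
  have hnewton := card_mul_esymm_succ_le (fun i => (inv_pos.2 (hx i)).le) m
  have hcomp := fun j (hj : j ≤ n) => esymm_univ_eq_prod_mul_esymm_inv hj fun i => (hx i).ne'
  rw [hcomp n le_rfl, hcomp k (by omega), hcomp (n - 1) (by omega), hcomp (k + 1) (by omega),
    Nat.sub_self, show n - k = m + 1 by omega, show n - (n - 1) = 1 by omega,
    show n - (k + 1) = m by omega, esymm_zero]
  have hcast : (n : R) = k + 1 + m := by rw [hm]; push_cast; ring
  rw [hcast] at hnewton ⊢
  have hscaled := mul_le_mul_of_nonneg_left hnewton (mul_pos hP hP).le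
  linear_combination hscaled

end Field

end ElementarySymmetric

section ElementarySymmetricFin

variable {n : ℕ}

theorem S_natCast_s19 (k : ℕ) (x : Fin n → ℝ) : S k x = esymm univ k x := by
  rw [S, if_pos (Int.natCast_nonneg k), Int.toNat_natCast]
  rfl

theorem S_of_neg {m : ℤ} (hm : m < 0) (x : Fin n → ℝ) : S m x = 0 :=
  if_neg (by omega)

theorem S_pos_s19 {m : ℤ} (h0 : 0 ≤ m) (hm : m ≤ n) {x : Fin n → ℝ} (hx : ∀ i, 0 < x i) :
    0 < S m x := by
  lift m to ℕ using h0
  rw [S_natCast_s19]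
  exact esymm_pos (by simpa using hm) hx

-- `S m (update x i 0)` is the paper's `S_{m;i}`.
theorem S_update (m : ℤ) (x : Fin n → ℝ) (i : Fin n) (t : ℝ) :
    S m (update x i t) = S m (update x i 0) + t * S (m - 1) (update x i 0) := by
  rcases lt_or_ge m 0 with hm | hm
  · simp [S_of_neg hm, S_of_neg (by omega : m - 1 < 0)]
  lift m to ℕ using hm
  cases m with
  | zero => simp [S]
  | succ k =>
    rw [show ((k + 1 : ℕ) : ℤ) - 1 = k by omega, S_natCast_s19, S_natCast_s19, S_natCast_s19,
      esymm_univ_update_succ, esymm_univ_update_succ, zero_mul, add_zero, esymm_univ_update_zero]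

theorem sum_S_update_zero (m : ℤ) (x : Fin n → ℝ) :
    ∑ i, S m (update x i 0) = ((n : ℝ) - m) * S m x := by
  rcases lt_or_ge m 0 with hm | hm
  · simp [S_of_neg hm]
  lift m to ℕ using hm
  simp_rw [S_natCast_s19, esymm_univ_update_zero, sum_esymm_erase, Fintype.card_fin, Int.cast_natCast]

theorem card_mul_S_mul_S_sub_one_le {l : ℤ} (hl0 : 0 ≤ l) (hln : l < n) {x : Fin n → ℝ}
    (hx : ∀ i, 0 < x i) :
    (n : ℝ) * (n - l + 1) * (S n x * S (l - 1) x) ≤ l * (S (n - 1) x * S l x) := by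
  lift l to ℕ using hl0
  cases l with
  | zero => simp [S_of_neg]
  | succ k =>
    have h := card_mul_esymm_card_mul_esymm_le hx (k := k) (by rw [Fintype.card_fin]; omega)
    rw [Fintype.card_fin] at h
    rw [Nat.cast_succ, add_sub_cancel_right, show (n : ℤ) - 1 = ((n - 1 : ℕ) : ℤ) by omega,
      S_natCast_s19, S_natCast_s19, S_natCast_s19, ← Nat.cast_succ, S_natCast_s19]
    push_cast
    linear_combination h

theorem hasDerivAt_S_update (m : ℤ) (x : Fin n → ℝ) (i : Fin n) (t : ℝ) :
    HasDerivAt (fun t => S m (update x i t)) (S (m - 1) (update x i 0)) t := by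
  rw [show (fun t => S m (update x i t))
      = fun t => S m (update x i 0) + t * S (m - 1) (update x i 0) from funext (S_update m x i)]
  simpa using ((hasDerivAt_id t).mul_const (S (m - 1) (update x i 0))).const_add
    (S m (update x i 0))

theorem hasDerivAt_rpow_S_div_S (p l : ℤ) (a : ℝ) {x : Fin n → ℝ} (hp : S p x ≠ 0)
    (hl : S l x ≠ 0) (i : Fin n) :
    HasDerivAt (fun t => (S p (update x i t) / S l (update x i t)) ^ a)
      (a * (S p x / S l x) ^ (a - 1)
        * ((S (p - 1) (update x i 0) * S l x - S p x * S (l - 1) (update x i 0)) / S l x ^ 2))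
      (x i) := by
  have h := ((hasDerivAt_S_update p x i (x i)).div (hasDerivAt_S_update l x i (x i))
    (by rwa [update_eq_self])).rpow_const (p := a) (Or.inl (by simp [hp, hl]))
  simp only [update_eq_self, Pi.div_apply] at h
  convert h using 1
  ring

end ElementarySymmetricFin

theorem stmt19_general (n : ℕ) (l : ℤ) (hl0 : 0 ≤ l) (hln : l < n)
    (lam : Fin n → ℝ)
    (hpos : ∀ i, 0 < lam i) (d : Fin n → ℝ)
    (hd : ∀ i, HasDerivAt
      (fun t : ℝ =>
        (S (n : ℤ) (Function.update lam i t) / S l (Function.update lam i t))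
          ^ ((1 : ℝ) / ((n : ℝ) - (l : ℝ))))
      (d i) (lam i)) :
    (((n : ℝ) - (l : ℝ)) / (n : ℝ))
        * ((1 / ((n : ℝ) - (l : ℝ)))
            * (S (n : ℤ) lam / S l lam) ^ ((1 : ℝ) / ((n : ℝ) - (l : ℝ)) - 1))
        * (S ((n : ℤ) - 1) lam / S l lam)
      ≤ ∑ i, d i := by
  set α : ℝ := 1 / ((n : ℝ) - l)
  have hSl : 0 < S l lam := S_pos_s19 hl0 hln.le hpos
  have hSn : 0 < S n lam := S_pos_s19 (Int.natCast_nonneg n) le_rfl hpos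
  have hn : (0 : ℝ) < n := by exact_mod_cast (by omega : 0 < n)
  have hα : 0 < α := one_div_pos.2 (sub_pos.2 (by exact_mod_cast hln))
  have hsum : ∑ i, d i = α * (S n lam / S l lam) ^ (α - 1)
      * ((S (n - 1) lam * S l lam - (n - l + 1) * S n lam * S (l - 1) lam) / S l lam ^ 2) := by
    rw [sum_congr rfl fun i _ => (hd i).unique (hasDerivAt_rpow_S_div_S n l α hSn.ne' hSl.ne' i),
      ← mul_sum, ← sum_div, sum_sub_distrib, ← sum_mul, ← mul_sum, sum_S_update_zero,
      sum_S_update_zero]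
    push_cast
    ring
  have hnewton := card_mul_S_mul_S_sub_one_le hl0 hln hpos
  rw [hsum, mul_comm (_ / _), mul_assoc]
  refine mul_le_mul_of_nonneg_left ?_ (by positivity)
  rw [div_mul_div_comm, div_le_div_iff₀ (by positivity) (by positivity)]
  linear_combination S l lam * hnewton

theorem stmt19 (n : ℕ) (hn : 2 ≤ n) (l : ℤ) (hl0 : 0 ≤ l) (hln : l < n)
    (lam : Fin n → ℝ) (hdec : ∀ i j : Fin n, i ≤ j → lam j ≤ lam i)
    (hpos : ∀ i, 0 < lam i) (d : Fin n → ℝ)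
    (hd : ∀ i, HasDerivAt
      (fun t : ℝ =>
        (S (n : ℤ) (Function.update lam i t) / S l (Function.update lam i t))
          ^ ((1 : ℝ) / ((n : ℝ) - (l : ℝ))))
      (d i) (lam i)) :
    (((n : ℝ) - (l : ℝ)) / (n : ℝ))
        * ((1 / ((n : ℝ) - (l : ℝ)))
            * (S (n : ℤ) lam / S l lam) ^ ((1 : ℝ) / ((n : ℝ) - (l : ℝ)) - 1))
        * (S ((n : ℤ) - 1) lam / S l lam)
      ≤ ∑ i, d i :=
  stmt19_general n l hl0 hln lam hpos d hd
end
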